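/- arXiv:2005.11448 — 2 statements merged into one kernel-verified Lean document; each statement's English description precedes it below -/
import Mathlib

section
/- For all real numbers a, b > 0 with a ≠ b and all v ∈ (0,1), one has a♯_v b ≤ ((a∇_v b)·(a♯_v b))^{1/2} ≤ I_v(a,b). -/
/-- The logarithmic mean of two positive reals. -/
noncomputable def logMean (a b : ℝ) : ℝ :=
  if a = b then a else (b - a) / (Real.log b - Real.log a)

/-- The identric mean of two positive reals. -/
noncomputable def idMean (a b : ℝ) : ℝ :=
  if a = b then a else Real.exp (-1) * (b ^ b / a ^ a) ^ (b - a)⁻¹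

/-- The weighted arithmetic mean `a ∇_v b`. -/
def wArith (v a b : ℝ) : ℝ := (1 - v) * a + v * b

/-- The weighted geometric mean `a ♯_v b`. -/
noncomputable def wGeom (v a b : ℝ) : ℝ := a ^ (1 - v) * b ^ v

/-- The weighted harmonic mean `a !_v b`. -/
noncomputable def wHarm (v a b : ℝ) : ℝ := ((1 - v) / a + v / b)⁻¹

/-- The weighted logarithmic mean `L_v(a,b)` (for `a ≠ b`, `v ∈ (0,1)`). -/
noncomputable def wLog (v a b : ℝ) : ℝ :=
  (1 / (Real.log a - Real.log b)) *
    (((1 - v) / v) * (a - a ^ (1 - v) * b ^ v) + (v / (1 - v)) * (a ^ (1 - v) * b ^ v - b))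

/-- The weighted identric mean `I_v(a,b)` (for `a ≠ b`, `v ∈ (0,1)`). -/
noncomputable def wId (v a b : ℝ) : ℝ :=
  Real.exp (-1) * wArith v a b ^ ((1 - 2 * v) * wArith v a b / (v * (1 - v) * (b - a))) *
    (b ^ (v * b / (1 - v)) / a ^ ((1 - v) * a / v)) ^ (b - a)⁻¹

/-!
With `A = a ∇_v b` one has `A - a = v (b - a)` and `b - A = (1 - v)(b - a)`, and the weighted
identric mean splits as `I_v(a,b) = I(a,A)^(1-v) · I(A,b)^v`. The classical inequality
`√(xy) ≤ I(x,y)`, equivalent to `L(x,y) ≤ (x+y)/2` for the logarithmic mean, applied to both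
factors gives `I_v(a,b) ≥ (aA)^((1-v)/2) (Ab)^(v/2) = (A · a♯_v b)^(1/2)`. The first inequality is
the weighted AM-GM inequality `a♯_v b ≤ A`.
-/

open Real

theorem idMean_comm {x y : ℝ} (hx : 0 < x) (hy : 0 < y) : idMean x y = idMean y x := by
  unfold idMean
  split_ifs with h h' h'
  · exact h
  · exact absurd h.symm h'
  · exact absurd h'.symm h
  · rw [← inv_div, inv_rpow (by positivity), ← rpow_neg (by positivity), neg_inv, neg_sub]

theorem logMean_le_add_div_two_of_lt {x y : ℝ} (hx : 0 < x) (hxy : x < y) :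
    logMean x y ≤ (x + y) / 2 := by
  have hyx : 0 < y - x := sub_pos.2 hxy
  have hlog : log x < log y := log_lt_log hx hxy
  -- the first term of `log (1 + 1/t) = 2 ∑ (2t+1)^-(2k+1) / (2k+1)` at `t = x/(y-x)`
  have hfirst := le_hasSum (hasSum_log_one_add_inv (div_pos hx hyx)) 0
    (fun _ _ => by positivity)
  have hsum : 0 < x + y := by linarith
  have hone : 1 + (x / (y - x))⁻¹ = y / x := by field_simp; ring
  have htwo : 1 / (2 * (x / (y - x)) + 1) = (y - x) / (x + y) := by field_simp; ring
  simp only [Nat.cast_zero, mul_zero, zero_add, div_one, mul_one, pow_one, hone, htwo,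
    log_div (by linarith : y ≠ 0) hx.ne'] at hfirst
  rw [← mul_div_assoc, div_le_iff₀ hsum] at hfirst
  rw [logMean, if_neg hxy.ne, div_le_iff₀ (sub_pos.2 hlog)]
  linarith

theorem log_idMean {x y : ℝ} (hx : 0 < x) (hy : 0 < y) (hxy : x ≠ y) :
    log (idMean x y) = (y * log y - x * log x) / (y - x) - 1 := by
  rw [idMean, if_neg hxy, log_mul (exp_pos _).ne' (by positivity), log_exp,
    log_rpow (by positivity), log_div (by positivity) (by positivity), log_rpow hy, log_rpow hx]
  ring

theorem log_add_log_le_two_mul_log_idMean {x y : ℝ} (hx : 0 < x) (hy : 0 < y) :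
    log x + log y ≤ 2 * log (idMean x y) := by
  wlog hxy : x < y generalizing x y
  · rcases (not_lt.1 hxy).lt_or_eq with hyx | rfl
    · rw [idMean_comm hx hy, add_comm]
      exact this hy hx hyx
    · simp [idMean, two_mul]
  have hyx : 0 < y - x := sub_pos.2 hxy
  have hlog : 0 < log y - log x := sub_pos.2 (log_lt_log hx hxy)
  have hLA := logMean_le_add_div_two_of_lt hx hxy
  rw [logMean, if_neg hxy.ne, div_le_iff₀ hlog] at hLA
  rw [log_idMean hx hy hxy.ne, mul_sub, mul_div_assoc', le_sub_iff_add_le, le_div_iff₀ hyx]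
  linear_combination 2 * hLA

section Weighted

variable {a b v : ℝ}

theorem log_wGeom (ha : 0 < a) (hb : 0 < b) :
    log (wGeom v a b) = (1 - v) * log a + v * log b := by
  rw [wGeom, log_mul (by positivity) (by positivity), log_rpow ha, log_rpow hb]

theorem wArith_pos (ha : 0 < a) (hb : 0 < b) (hv : v ∈ Set.Icc (0 : ℝ) 1) : 0 < wArith v a b := by
  rcases hv.1.lt_or_eq with hv0 | rfl
  · unfold wArith; nlinarith [hv.2]
  · simpa [wArith] using ha

theorem wGeom_le_wArith (ha : 0 < a) (hb : 0 < b) (hv : v ∈ Set.Icc (0 : ℝ) 1) :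
    wGeom v a b ≤ wArith v a b :=
  geom_mean_le_arith_mean2_weighted (by linarith [hv.2]) hv.1 ha.le hb.le (by ring)

theorem wArith_sub_left : wArith v a b - a = v * (b - a) := by rw [wArith]; ring

theorem sub_wArith_right : b - wArith v a b = (1 - v) * (b - a) := by rw [wArith]; ring

theorem log_wId (ha : 0 < a) (hb : 0 < b) (hab : a ≠ b) (hv : v ∈ Set.Ioo (0 : ℝ) 1) :
    log (wId v a b) = (1 - v) * log (idMean a (wArith v a b)) +
      v * log (idMean (wArith v a b) b) := by
  obtain ⟨hv0, hv1⟩ := hv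
  set A := wArith v a b with hA_def
  have hA : 0 < A := wArith_pos ha hb ⟨hv0.le, hv1.le⟩
  have hba : b - a ≠ 0 := sub_ne_zero.2 hab.symm
  have hv1' : 1 - v ≠ 0 := by linarith
  have hAa : A - a = v * (b - a) := wArith_sub_left
  have hbA : b - A = (1 - v) * (b - a) := sub_wArith_right
  have haA : a ≠ A := fun h => by simp [← h, hv0.ne', hba] at hAa
  have hAb : A ≠ b := fun h => by simp [h, hv1', hba] at hbA
  rw [log_idMean ha hA haA, log_idMean hA hb hAb, hAa, hbA, wId, ← hA_def,
    log_mul (by positivity) (by positivity), log_mul (exp_pos _).ne' (by positivity), log_exp,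
    log_rpow hA, log_rpow (by positivity), log_div (by positivity) (by positivity),
    log_rpow hb, log_rpow ha]
  field_simp
  ring

end Weighted

/-- `a♯_v b ≤ ((a∇_v b)(a♯_v b))^{1/2} ≤ I_v(a,b)`. -/
theorem wGeom_le_wId_refinement (a b v : ℝ) (ha : 0 < a) (hb : 0 < b) (hab : a ≠ b)
    (hv : v ∈ Set.Ioo (0 : ℝ) 1) :
    wGeom v a b ≤ (wArith v a b * wGeom v a b) ^ ((1 : ℝ) / 2) ∧
      (wArith v a b * wGeom v a b) ^ ((1 : ℝ) / 2) ≤ wId v a b := by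
  have hv' : v ∈ Set.Icc (0 : ℝ) 1 := Set.Ioo_subset_Icc_self hv
  have hA := wArith_pos ha hb hv'
  have hG : 0 < wGeom v a b := by unfold wGeom; positivity
  refine ⟨?_, ?_⟩
  · rw [← sqrt_eq_rpow, le_sqrt hG.le (by positivity), sq]
    exact mul_le_mul_of_nonneg_right (wGeom_le_wArith ha hb hv') hG.le
  · have hI : 0 < wId v a b := by unfold wId; positivity
    rw [← log_le_log_iff (by positivity) hI, log_rpow (by positivity), log_mul hA.ne' hG.ne',
      log_wGeom ha hb, log_wId ha hb hab hv]
    have hv0 : 0 ≤ v := hv'.1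
    have hv1 : 0 ≤ 1 - v := by linarith [hv'.2]
    have hGI_left := mul_le_mul_of_nonneg_left (log_add_log_le_two_mul_log_idMean ha hA) hv1
    have hGI_right := mul_le_mul_of_nonneg_left (log_add_log_le_two_mul_log_idMean hA hb) hv0
    linear_combination (hGI_left + hGI_right) / 2
end

section
/- Let H be a complex Hilbert space and let A, B be positive invertible bounded operators on H. Then for every v ∈ (0,1), in the Loewner order: A♯_v B ≤ (1−v)·(A♯_{v/2} B) + v·(A♯_{(1+v)/2} B) ≤ L_v(A,B) ≤ ((A♯_v B) + (A∇_v B))/2 ≤ A∇_v B. -/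
/-- Scalar weighted logarithmic mean `L_v(a,b)`, extended by `L_v(a,a) = a`. -/
noncomputable def wLogScalar (v a b : ℝ) : ℝ :=
  if a = b then a else
    (1 / (Real.log a - Real.log b)) *
      (((1 - v) / v) * (a - a ^ (1 - v) * b ^ v) + (v / (1 - v)) * (a ^ (1 - v) * b ^ v - b))

/-- Scalar weighted identric mean `I_v(a,b)`, extended by `I_v(a,a) = a`. -/
noncomputable def wIdScalar (v a b : ℝ) : ℝ :=
  if a = b then a else
    Real.exp (-1) *
      ((1 - v) * a + v * b) ^
        ((1 - 2 * v) * ((1 - v) * a + v * b) / (v * (1 - v) * (b - a))) *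
      (b ^ (v * b / (1 - v)) / a ^ ((1 - v) * a / v)) ^ (b - a)⁻¹

variable {H : Type*} [NormedAddCommGroup H] [InnerProductSpace ℂ H] [CompleteSpace H]

/-- The operator mean `m_f(A,B) = A^{1/2} f(A^{-1/2} B A^{-1/2}) A^{1/2}` associated to a
function `f : (0,∞) → ℝ` with `f(1) = 1`, via the continuous functional calculus. -/
noncomputable def opMeanOf (f : ℝ → ℝ) (A B : H →L[ℂ] H) : H →L[ℂ] H :=
  cfc Real.sqrt A *
    cfc f (Ring.inverse (cfc Real.sqrt A) * B * Ring.inverse (cfc Real.sqrt A)) *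
      cfc Real.sqrt A

/-- The weighted operator arithmetic mean `A ∇_v B = (1-v)A + vB`. -/
noncomputable def opWArith (v : ℝ) (A B : H →L[ℂ] H) : H →L[ℂ] H :=
  (1 - v : ℝ) • A + v • B

/-- The weighted operator geometric mean `A ♯_v B = A^{1/2}(A^{-1/2}BA^{-1/2})^v A^{1/2}`. -/
noncomputable def opWGeom (v : ℝ) (A B : H →L[ℂ] H) : H →L[ℂ] H :=
  opMeanOf (fun x => x ^ v) A B

/-- The operator logarithmic mean, with representing function `f_L(x) = (x-1)/log x`. -/
noncomputable def opLog (A B : H →L[ℂ] H) : H →L[ℂ] H :=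
  opMeanOf (fun x => if x = 1 then 1 else (x - 1) / Real.log x) A B

/-- The operator identric mean, with representing function `f_I(x) = e⁻¹ x^{x/(x-1)}`. -/
noncomputable def opId (A B : H →L[ℂ] H) : H →L[ℂ] H :=
  opMeanOf (fun x => if x = 1 then 1 else Real.exp (-1) * x ^ (x / (x - 1))) A B

/-- The weighted operator logarithmic mean, with representing function `F_{L_v}(x) = L_v(1,x)`. -/
noncomputable def opWLog (v : ℝ) (A B : H →L[ℂ] H) : H →L[ℂ] H :=
  opMeanOf (fun x => wLogScalar v 1 x) A B

/-- The weighted operator identric mean, with representing function `F_{I_v}(x) = I_v(1,x)`. -/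
noncomputable def opWId (v : ℝ) (A B : H →L[ℂ] H) : H →L[ℂ] H :=
  opMeanOf (fun x => wIdScalar v 1 x) A B

/-!
Each mean in the chain is `m_f(A, B)` for an explicit `f`, and `f ↦ m_f(A, B)` is linear and
monotone on functions continuous on `(0, ∞)`: `A^{-1/2} B A^{-1/2}` is strictly positive, so the
functional calculus is monotone on its spectrum, and congruence by `A^{1/2}` preserves `≤`. So it
suffices to prove the scalar chain for `x > 0`. Writing `x = e^t` and `φ = dslope exp 0`, i.e.
`φ(s) = (e^s - 1)/s`, one has `L_v(1, e^t) = (1-v) φ(vt) + v e^{vt} φ((1-v)t)`, and the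
Hermite–Hadamard bounds `e^{s/2} ≤ φ(s) ≤ (1 + e^s)/2` for `exp` give the two middle
inequalities; the outer two are weighted AM–GM.
-/

open Real Set

lemma sinh_le_mul_cosh {u : ℝ} (hu : 0 ≤ u) : sinh u ≤ u * cosh u := by
  have hmono : MonotoneOn (fun u => u * cosh u - sinh u) (Ici 0) := by
    refine monotoneOn_of_deriv_nonneg (convex_Ici 0) (by fun_prop) (by fun_prop) fun x hx => ?_
    rw [interior_Ici] at hx
    have hd : HasDerivAt (fun u => u * cosh u - sinh u) (1 * cosh x + x * sinh x - cosh x) x :=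
      ((hasDerivAt_id x).mul (hasDerivAt_cosh x)).sub (hasDerivAt_sinh x)
    rw [hd.deriv, one_mul, add_sub_cancel_left]
    exact mul_nonneg hx.le (sinh_nonneg_iff.mpr hx.le)
  simpa using hmono self_mem_Ici hu hu

lemma one_le_sinh_div_self {u : ℝ} (hu : u ≠ 0) : 1 ≤ sinh u / u := by
  rcases hu.lt_or_gt with h | h
  · rw [le_div_iff_of_neg h, one_mul]
    exact sinh_le_self_iff.mpr h.le
  · rw [le_div_iff₀ h, one_mul]
    exact self_le_sinh_iff.mpr h.le

lemma sinh_div_self_le_cosh {u : ℝ} (hu : u ≠ 0) : sinh u / u ≤ cosh u := by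
  rcases hu.lt_or_gt with h | h
  · have := sinh_le_mul_cosh (neg_nonneg.mpr h.le)
    rw [sinh_neg, cosh_neg] at this
    rw [div_le_iff_of_neg h]
    linarith
  · rw [div_le_iff₀ h]
    linarith [sinh_le_mul_cosh h.le]

lemma dslope_exp_zero_two_mul {u : ℝ} (hu : u ≠ 0) :
    dslope exp 0 (2 * u) = exp u * (sinh u / u) := by
  rw [dslope_of_ne _ (by simpa using hu), slope_def_field, sinh_eq, exp_zero, sub_zero]
  have : exp (2 * u) = exp u * exp u := by rw [← exp_add, two_mul]
  rw [this, exp_neg]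
  field_simp

lemma exp_half_le_dslope_exp (s : ℝ) : exp (s / 2) ≤ dslope exp 0 s := by
  rcases eq_or_ne s 0 with rfl | hs
  · simp [dslope_same]
  · have hu : s / 2 ≠ 0 := by simpa using hs
    rw [show s = 2 * (s / 2) by ring, dslope_exp_zero_two_mul hu,
      mul_div_cancel_left₀ _ two_ne_zero]
    exact le_mul_of_one_le_right (exp_pos _).le (one_le_sinh_div_self hu)

lemma dslope_exp_le (s : ℝ) : dslope exp 0 s ≤ (1 + exp s) / 2 := by
  rcases eq_or_ne s 0 with rfl | hs
  · simp [dslope_same]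
  · have hu : s / 2 ≠ 0 := by simpa using hs
    have hcosh : (1 + exp s) / 2 = exp (s / 2) * cosh (s / 2) := by
      rw [cosh_eq, mul_div_assoc', mul_add, ← exp_add, ← exp_add]
      ring_nf
      simp only [exp_zero]
      ring
    rw [hcosh, show s = 2 * (s / 2) by ring, dslope_exp_zero_two_mul hu,
      mul_div_cancel_left₀ _ two_ne_zero]
    exact mul_le_mul_of_nonneg_left (sinh_div_self_le_cosh hu) (exp_pos _).le

lemma continuous_dslope_exp_zero : Continuous (dslope exp 0) :=
  continuousOn_univ.mp <| (continuousOn_dslope Filter.univ_mem).mpr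
    ⟨continuous_exp.continuousOn, differentiableAt_exp⟩

lemma exp_mul_le_one_sub_add_mul_exp {v : ℝ} (hv0 : 0 ≤ v) (hv1 : v ≤ 1) (t : ℝ) :
    exp (t * v) ≤ 1 - v + v * exp t := by
  have := convexOn_exp.2 (mem_univ 0) (mem_univ t) (sub_nonneg.mpr hv1) hv0 (by ring)
  simpa [mul_comm t v] using this

section ScalarChain
variable {v x : ℝ}

lemma wLogScalar_one_exp (hv0 : v ≠ 0) (hv1 : v ≠ 1) (t : ℝ) :
    wLogScalar v 1 (exp t) =
      (1 - v) * dslope exp 0 (t * v) + v * exp (t * v) * dslope exp 0 (t * (1 - v)) := by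
  rcases eq_or_ne t 0 with rfl | ht
  · simp [wLogScalar, dslope_same]
  have hv1' : 1 - v ≠ 0 := sub_ne_zero.mpr hv1.symm
  have hsplit : exp t = exp (t * v) * exp (t * (1 - v)) := by rw [← exp_add]; ring_nf
  rw [wLogScalar, if_neg (by rwa [eq_comm, exp_eq_one_iff]),
    dslope_of_ne _ (by simpa using ⟨ht, hv0⟩), dslope_of_ne _ (by simpa using ⟨ht, hv1'⟩),
    slope_def_field, slope_def_field, exp_zero, log_one, log_exp, one_rpow, one_mul, ← exp_mul,
    hsplit]
  field_simp
  ring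

lemma continuousOn_wLogScalar_one (hv0 : v ≠ 0) (hv1 : v ≠ 1) :
    ContinuousOn (wLogScalar v 1) (Ioi 0) := by
  have hrep : ContinuousOn (fun x => (1 - v) * dslope exp 0 (log x * v) +
      v * exp (log x * v) * dslope exp 0 (log x * (1 - v))) (Ioi 0) := by
    have := continuous_dslope_exp_zero
    have hlog : ContinuousOn log (Ioi 0) := continuousOn_log.mono fun x hx => ne_of_gt hx
    fun_prop
  refine hrep.congr fun x hx => ?_
  dsimp only
  rw [← wLogScalar_one_exp hv0 hv1, exp_log hx]


lemma rpow_le_one_sub_add_mul (hv0 : 0 ≤ v) (hv1 : v ≤ 1) (hx : 0 < x) :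
    x ^ v ≤ 1 - v + v * x := by
  obtain ⟨t, rfl⟩ : ∃ t, exp t = x := ⟨log x, exp_log hx⟩
  rw [← exp_mul]
  exact exp_mul_le_one_sub_add_mul_exp hv0 hv1 t

lemma rpow_le_one_sub_mul_rpow_add_mul_rpow (hv0 : 0 ≤ v) (hv1 : v ≤ 1) (hx : 0 < x) :
    x ^ v ≤ (1 - v) * x ^ (v / 2) + v * x ^ ((1 + v) / 2) := by
  obtain ⟨t, rfl⟩ : ∃ t, exp t = x := ⟨log x, exp_log hx⟩
  simp only [← exp_mul]
  have hsplit : exp (t * v) = exp (t * (v / 2)) * exp (t / 2 * v) := by rw [← exp_add]; ring_nf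
  have hshift : exp (t * (v / 2)) * exp (t / 2) = exp (t * ((1 + v) / 2)) := by
    rw [← exp_add]; ring_nf
  calc exp (t * v) ≤ exp (t * (v / 2)) * (1 - v + v * exp (t / 2)) := by
        rw [hsplit]; gcongr; exact exp_mul_le_one_sub_add_mul_exp hv0 hv1 _
    _ = (1 - v) * exp (t * (v / 2)) + v * exp (t * ((1 + v) / 2)) := by
        rw [← hshift]; ring

lemma one_sub_mul_rpow_add_mul_rpow_le_wLogScalar (hv0 : 0 < v) (hv1 : v < 1) (hx : 0 < x) :
    (1 - v) * x ^ (v / 2) + v * x ^ ((1 + v) / 2) ≤ wLogScalar v 1 x := by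
  obtain ⟨t, rfl⟩ : ∃ t, exp t = x := ⟨log x, exp_log hx⟩
  simp only [← exp_mul]
  rw [wLogScalar_one_exp hv0.ne' hv1.ne]
  have h₁ : exp (t * (v / 2)) ≤ dslope exp 0 (t * v) := by
    simpa only [mul_div_assoc] using exp_half_le_dslope_exp (t * v)
  have h₂ : exp (t * ((1 + v) / 2)) ≤ exp (t * v) * dslope exp 0 (t * (1 - v)) := by
    have hshift : exp (t * ((1 + v) / 2)) = exp (t * v) * exp (t * (1 - v) / 2) := by
      rw [← exp_add]; ring_nf
    rw [hshift]
    gcongr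
    exact exp_half_le_dslope_exp _
  have := mul_le_mul_of_nonneg_left h₁ (sub_nonneg.mpr hv1.le)
  have := mul_le_mul_of_nonneg_left h₂ hv0.le
  linarith

lemma wLogScalar_le_half_rpow_add_half_mul (hv0 : 0 < v) (hv1 : v < 1) (hx : 0 < x) :
    wLogScalar v 1 x ≤ 1 / 2 * x ^ v + 1 / 2 * (1 - v + v * x) := by
  obtain ⟨t, rfl⟩ : ∃ t, exp t = x := ⟨log x, exp_log hx⟩
  rw [← exp_mul, wLogScalar_one_exp hv0.ne' hv1.ne]
  have hsplit : exp (t * v) * exp (t * (1 - v)) = exp t := by rw [← exp_add]; ring_nf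
  have h₁ := mul_le_mul_of_nonneg_left (dslope_exp_le (t * v)) (sub_nonneg.mpr hv1.le)
  have h₂ := mul_le_mul_of_nonneg_left (dslope_exp_le (t * (1 - v)))
    (mul_nonneg hv0.le (exp_pos (t * v)).le)
  linear_combination h₁ + h₂ + v / 2 * hsplit

end ScalarChain

section OperatorMean
variable {A B : H →L[ℂ] H}

lemma isStrictlyPositive_cfc_sqrt (hA : IsStrictlyPositive A) :
    IsStrictlyPositive (cfc Real.sqrt A) :=
  (cfc_isStrictlyPositive_iff Real.sqrt A).mpr fun _ hx => sqrt_pos.mpr (hA.spectrum_pos hx)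

lemma cfc_sqrt_mul_self (hA : 0 ≤ A) : cfc Real.sqrt A * cfc Real.sqrt A = A := by
  rw [← cfc_mul Real.sqrt Real.sqrt A]
  conv_rhs => rw [← cfc_id' ℝ A]
  exact cfc_congr fun x hx => mul_self_sqrt (spectrum_nonneg_of_nonneg hA hx)

lemma isStrictlyPositive_opMeanOf_arg (hA : IsStrictlyPositive A) (hB : IsStrictlyPositive B) :
    IsStrictlyPositive (Ring.inverse (cfc Real.sqrt A) * B * Ring.inverse (cfc Real.sqrt A)) :=
  have hS := (isStrictlyPositive_cfc_sqrt hA).ringInverse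
  IsStrictlyPositive.conjugate_of_isUnit_of_isSelfAdjoint B _ hS.isUnit hS.isSelfAdjoint hB

variable (hA : IsStrictlyPositive A) (hB : IsStrictlyPositive B)
include hA hB

lemma spectrum_opMeanOf_arg_subset_Ioi :
    spectrum ℝ (Ring.inverse (cfc Real.sqrt A) * B * Ring.inverse (cfc Real.sqrt A)) ⊆ Ioi 0 :=
  fun _ hx => (isStrictlyPositive_opMeanOf_arg hA hB).spectrum_pos hx

lemma opMeanOf_mono {f g : ℝ → ℝ} (hf : ContinuousOn f (Ioi 0)) (hg : ContinuousOn g (Ioi 0))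
    (hfg : ∀ x ∈ Ioi 0, f x ≤ g x) : opMeanOf f A B ≤ opMeanOf g A B := by
  have hC := spectrum_opMeanOf_arg_subset_Ioi hA hB
  exact IsSelfAdjoint.conjugate_le_conjugate
    (cfc_mono (fun x hx => hfg x (hC hx)) (hf.mono hC) (hg.mono hC)) (cfc_predicate _ _)

lemma opMeanOf_const_mul_add_const_mul {f g : ℝ → ℝ} (hf : ContinuousOn f (Ioi 0))
    (hg : ContinuousOn g (Ioi 0)) (a b : ℝ) :
    opMeanOf (fun x => a * f x + b * g x) A B = a • opMeanOf f A B + b • opMeanOf g A B := by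
  have hC := spectrum_opMeanOf_arg_subset_Ioi hA hB
  rw [opMeanOf, cfc_add _ (fun x => a * f x) (fun x => b * g x) ((hf.mono hC).const_smul a)
    ((hg.mono hC).const_smul b), cfc_const_mul _ _ _ (hf.mono hC),
    cfc_const_mul _ _ _ (hg.mono hC)]
  simp only [mul_add, add_mul, mul_smul_comm, smul_mul_assoc, opMeanOf]

lemma opMeanOf_const_add_mul (a b : ℝ) :
    opMeanOf (fun x => a + b * x) A B = a • A + b • B := by
  have hS := isStrictlyPositive_cfc_sqrt hA
  have hone : opMeanOf (fun _ => 1) A B = A := by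
    rw [opMeanOf, cfc_const_one ℝ (ha := (isStrictlyPositive_opMeanOf_arg hA hB).isSelfAdjoint),
      mul_one, cfc_sqrt_mul_self hA.nonneg]
  have hid : opMeanOf (fun x => x) A B = B := by
    rw [opMeanOf, cfc_id' ℝ _ (isStrictlyPositive_opMeanOf_arg hA hB).isSelfAdjoint]
    simp only [← mul_assoc, Ring.mul_inverse_cancel _ hS.isUnit, one_mul]
    rw [mul_assoc, Ring.inverse_mul_cancel _ hS.isUnit, mul_one]
  simpa only [mul_one, hone, hid] using
    opMeanOf_const_mul_add_const_mul hA hB (f := fun _ => 1) (g := fun x => x)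
      continuousOn_const continuousOn_id a b

end OperatorMean

/-- For positive invertible operators `A, B` on a complex Hilbert space and `v ∈ (0,1)`,
in the Loewner order:
`A♯_v B ≤ (1-v)(A♯_{v/2} B) + v(A♯_{(1+v)/2} B) ≤ L_v(A,B) ≤ ((A♯_v B)+(A∇_v B))/2 ≤ A∇_v B`. -/
theorem opWGeom_le_opWLog_le_opWArith (A B : H →L[ℂ] H)
    (hA : 0 ≤ A) (hB : 0 ≤ B) (hAu : IsUnit A) (hBu : IsUnit B)
    (v : ℝ) (hv : v ∈ Set.Ioo (0 : ℝ) 1) :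
    opWGeom v A B ≤ (1 - v : ℝ) • opWGeom (v / 2) A B + v • opWGeom ((1 + v) / 2) A B ∧
      (1 - v : ℝ) • opWGeom (v / 2) A B + v • opWGeom ((1 + v) / 2) A B ≤ opWLog v A B ∧
        opWLog v A B ≤ ((1 : ℝ) / 2) • (opWGeom v A B + opWArith v A B) ∧
          ((1 : ℝ) / 2) • (opWGeom v A B + opWArith v A B) ≤ opWArith v A B := by
  obtain ⟨hv0, hv1⟩ := hv
  have hA' := hAu.isStrictlyPositive hA
  have hB' := hBu.isStrictlyPositive hB
  have hpow (a : ℝ) : ContinuousOn (fun x : ℝ => x ^ a) (Ioi 0) :=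
    ContinuousOn.rpow_const continuousOn_id fun x hx => .inl (ne_of_gt hx)
  have hLog := continuousOn_wLogScalar_one hv0.ne' hv1.ne
  have hArith : opWArith v A B = opMeanOf (fun x => 1 - v + v * x) A B :=
    (opMeanOf_const_add_mul hA' hB' _ _).symm
  have hMid : (1 - v : ℝ) • opWGeom (v / 2) A B + v • opWGeom ((1 + v) / 2) A B =
      opMeanOf (fun x => (1 - v) * x ^ (v / 2) + v * x ^ ((1 + v) / 2)) A B :=
    (opMeanOf_const_mul_add_const_mul hA' hB' (hpow _) (hpow _) _ _).symm
  have hHalf : ((1 : ℝ) / 2) • (opWGeom v A B + opWArith v A B) =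
      opMeanOf (fun x => 1 / 2 * x ^ v + 1 / 2 * (1 - v + v * x)) A B := by
    rw [hArith, smul_add, opMeanOf_const_mul_add_const_mul hA' hB' (hpow v) (by fun_prop)]
    rfl
  rw [hMid, hHalf, hArith]
  refine ⟨opMeanOf_mono hA' hB' (hpow v) (by fun_prop) fun x hx => ?_,
    opMeanOf_mono hA' hB' (by fun_prop) hLog fun x hx => ?_,
    opMeanOf_mono hA' hB' hLog (by fun_prop) fun x hx => ?_,
    opMeanOf_mono hA' hB' (by fun_prop) (by fun_prop) fun x hx => ?_⟩
  · exact rpow_le_one_sub_mul_rpow_add_mul_rpow hv0.le hv1.le hx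
  · exact one_sub_mul_rpow_add_mul_rpow_le_wLogScalar hv0 hv1 hx
  · exact wLogScalar_le_half_rpow_add_half_mul hv0 hv1 hx
  · linarith [rpow_le_one_sub_add_mul hv0.le hv1.le hx]
end
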